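/- Let ρ be a 3×3 density matrix of rank 3 whose entries satisfy ρ₁₃ = ρ₃₁ = ρ₂₃ = ρ₃₂ = 0 (so ρ is block diagonal, with an arbitrary 2×2 positive block in the upper-left corner and the entry ρ₃₃ in the lower-right corner). Then C_{l1}(ρ) = C̃_{l1}(ρ). -/

import Mathlib

/-!
C_{l1} is subadditive and positively homogeneous, so C_{l1}(ρ) ≤ ∑ pᵢ C_{l1}(ψᵢ) for every
pure-state decomposition, and the convex roof equals C_{l1}(ρ) as soon as one decomposition
attains it. Writing ρ = L Lᴴ with L the Cholesky factor, ρ = ∑ₖ |vₖ⟩⟨vₖ| for the columns vₖ of L,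
which after normalisation is a pure-state decomposition. For block-diagonal ρ only the first
column has two nonzero entries, and its outer product carries both off-diagonal entries of ρ, so
this decomposition has the same coherence as ρ.
-/

open Matrix BigOperators
open scoped ComplexOrder

/-- The l1-norm of coherence: sum of absolute values of all off-diagonal entries. -/
noncomputable def Cl1 {d : ℕ} (ρ : Matrix (Fin d) (Fin d) ℂ) : ℝ :=
  ∑ i, ∑ j, if i ≠ j then ‖ρ i j‖ else 0

/-- A density matrix: positive semidefinite with trace 1. -/
def IsDensityMatrix {d : ℕ} (ρ : Matrix (Fin d) (Fin d) ℂ) : Prop :=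
  ρ.PosSemidef ∧ ρ.trace = 1

/-- Rank-one outer product |ψ⟩⟨ψ|. -/
noncomputable def outer {d : ℕ} (ψ : Fin d → ℂ) : Matrix (Fin d) (Fin d) ℂ :=
  Matrix.of fun i j => ψ i * (starRingEnd ℂ) (ψ j)

/-- ψ is a unit vector in ℂ^d. -/
def IsUnitVec {d : ℕ} (ψ : Fin d → ℂ) : Prop :=
  ∑ i, Complex.normSq (ψ i) = 1

/-- The convex-roof l1-norm of coherence. -/
noncomputable def convexRoofCl1 {d : ℕ} (ρ : Matrix (Fin d) (Fin d) ℂ) : ℝ :=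
  sInf { c : ℝ | ∃ (n : ℕ) (p : Fin n → ℝ) (ψ : Fin n → Fin d → ℂ),
    (∀ i, 0 ≤ p i) ∧ (∑ i, p i) = 1 ∧ (∀ i, IsUnitVec (ψ i)) ∧
    ρ = ∑ i, p i • outer (ψ i) ∧
    c = ∑ i, p i * Cl1 (outer (ψ i)) }

lemma Cl1_add_le {d : ℕ} (A B : Matrix (Fin d) (Fin d) ℂ) : Cl1 (A + B) ≤ Cl1 A + Cl1 B := by
  simp only [Cl1, ← Finset.sum_add_distrib]
  gcongr with i _ j _
  split_ifs
  · exact norm_add_le _ _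
  · simp

lemma Cl1_sum_le {d : ℕ} {ι : Type*} (s : Finset ι) (A : ι → Matrix (Fin d) (Fin d) ℂ) :
    Cl1 (∑ k ∈ s, A k) ≤ ∑ k ∈ s, Cl1 (A k) :=
  Finset.le_sum_of_subadditive Cl1 (by simp [Cl1]) Cl1_add_le s A

lemma Cl1_smul {d : ℕ} (c : ℝ) (A : Matrix (Fin d) (Fin d) ℂ) : Cl1 (c • A) = |c| * Cl1 A := by
  simp only [Cl1, Finset.mul_sum, mul_ite, mul_zero, Matrix.smul_apply, norm_smul,
    Real.norm_eq_abs]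

lemma Cl1_sum_smul_outer_le {d n : ℕ} (p : Fin n → ℝ) (ψ : Fin n → Fin d → ℂ)
    (hp : ∀ k, 0 ≤ p k) : Cl1 (∑ k, p k • outer (ψ k)) ≤ ∑ k, p k * Cl1 (outer (ψ k)) := by
  refine (Cl1_sum_le _ _).trans_eq (Finset.sum_congr rfl fun k _ => ?_)
  rw [Cl1_smul, abs_of_nonneg (hp k)]

lemma trace_outer {d : ℕ} (v : Fin d → ℂ) :
    (outer v).trace = ((∑ i, Complex.normSq (v i) : ℝ) : ℂ) := by
  simp [outer, Matrix.trace, Complex.mul_conj]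

lemma outer_smul {d : ℕ} (c : ℝ) (v : Fin d → ℂ) : outer (c • v) = (c ^ 2) • outer v := by
  ext i j
  simp only [outer, of_apply, Pi.smul_apply, Matrix.smul_apply, Complex.real_smul, map_mul,
    Complex.conj_ofReal, Complex.ofReal_pow]
  ring

lemma exists_isUnitVec_smul_outer_eq {d : ℕ} [NeZero d] (v : Fin d → ℂ) :
    ∃ ψ, IsUnitVec ψ ∧ (∑ i, Complex.normSq (v i) : ℝ) • outer ψ = outer v := by
  set s := ∑ i, Complex.normSq (v i) with hs
  have hs_nonneg : 0 ≤ s := Finset.sum_nonneg fun i _ => Complex.normSq_nonneg (v i)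
  obtain hs0 | hs_pos := hs_nonneg.eq_or_lt'
  · have hv : v = 0 := by
      funext i
      simpa using (Finset.sum_eq_zero_iff_of_nonneg (fun i _ => Complex.normSq_nonneg (v i))).1
        hs0 i (Finset.mem_univ i)
    refine ⟨Pi.single 0 1, by simp [IsUnitVec, Pi.single_apply], ?_⟩
    ext i j
    simp [hs0, hv, outer]
  · refine ⟨(√s)⁻¹ • v, ?_, ?_⟩
    · simp only [IsUnitVec, Pi.smul_apply, Complex.real_smul, Complex.normSq_mul,
        Complex.normSq_ofReal, ← Finset.mul_sum, ← hs]
      field_simp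
      rw [Real.sq_sqrt hs_pos.le]
    · rw [outer_smul, smul_smul, inv_pow, Real.sq_sqrt hs_pos.le,
        mul_inv_cancel₀ hs_pos.ne', one_smul]

lemma convexRoofCl1_eq_Cl1_of_sum_outer {d n : ℕ} [NeZero d] {ρ : Matrix (Fin d) (Fin d) ℂ}
    (htr : ρ.trace = 1) (v : Fin n → Fin d → ℂ) (hρ : ρ = ∑ k, outer (v k))
    (hCl1 : ∑ k, Cl1 (outer (v k)) ≤ Cl1 ρ) : convexRoofCl1 ρ = Cl1 ρ := by
  choose ψ hψ hψv using fun k => exists_isUnitVec_smul_outer_eq (v k)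
  set p : Fin n → ℝ := fun k => ∑ i, Complex.normSq (v k i)
  have hp : ∀ k, 0 ≤ p k := fun k => Finset.sum_nonneg fun i _ => Complex.normSq_nonneg _
  have hp_sum : ∑ k, p k = 1 := by
    rw [hρ, Matrix.trace_sum] at htr
    simp only [trace_outer] at htr
    exact_mod_cast htr
  have hρψ : ρ = ∑ k, p k • outer (ψ k) := hρ.trans (Finset.sum_congr rfl fun k _ => (hψv k).symm)
  have hCl1ψ : ∑ k, p k * Cl1 (outer (ψ k)) = ∑ k, Cl1 (outer (v k)) :=
    Finset.sum_congr rfl fun k _ => by rw [← hψv, Cl1_smul, abs_of_nonneg (hp k)]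
  have hCl1ρ : Cl1 ρ = ∑ k, p k * Cl1 (outer (ψ k)) :=
    le_antisymm (hρψ ▸ Cl1_sum_smul_outer_le p ψ hp) (hCl1ψ ▸ hCl1)
  refine IsLeast.csInf_eq ⟨⟨n, p, ψ, hp, hp_sum, hψ, hρψ, hCl1ρ⟩, ?_⟩
  rintro c ⟨m, q, φ, hq, -, -, rfl, rfl⟩
  exact Cl1_sum_smul_outer_le q φ hq

lemma Matrix.PosSemidef.norm_apply_sq_le {d : ℕ} {A : Matrix (Fin d) (Fin d) ℂ}
    (hA : A.PosSemidef) (i j : Fin d) : ‖A i j‖ ^ 2 ≤ (A i i).re * (A j j).re := by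
  have hdiag : ∀ k, ((A k k).re : ℂ) = A k k := hA.1.coe_re_apply_self
  have hdet := (hA.submatrix ![i, j]).det_nonneg
  simp only [Matrix.det_fin_two, submatrix_apply, Matrix.cons_val_zero, Matrix.cons_val_one,
    Matrix.cons_val_fin_one, ← hA.1.apply j i] at hdet
  rw [← hdiag i, ← hdiag j, Complex.star_def, Complex.mul_conj', ← Complex.ofReal_mul] at hdet
  exact_mod_cast sub_nonneg.mp hdet

lemma Matrix.PosSemidef.re_apply_self_nonneg {d : ℕ} {A : Matrix (Fin d) (Fin d) ℂ}
    (hA : A.PosSemidef) (i : Fin d) : 0 ≤ (A i i).re :=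
  (Complex.nonneg_iff.mp hA.diag_nonneg).1

lemma Matrix.PosSemidef.apply_eq_zero_of_re_apply_self_eq_zero {d : ℕ}
    {A : Matrix (Fin d) (Fin d) ℂ} (hA : A.PosSemidef) {i : Fin d} (hi : (A i i).re = 0)
    (j : Fin d) : A i j = 0 := by
  have h := hA.norm_apply_sq_le i j
  rwa [hi, zero_mul, sq_nonpos_iff, norm_eq_zero] at h

/-- The columns of the Cholesky factor of a block-diagonal `ρ`. When `(ρ 0 0).re = 0` the division
returns `0`, which is harmless since positivity then forces `ρ 0 1 = 0`. -/
noncomputable def choleskyColumn (ρ : Matrix (Fin 3) (Fin 3) ℂ) : Fin 3 → Fin 3 → ℂ :=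
  ![![(√(ρ 0 0).re : ℂ), star (ρ 0 1) / (√(ρ 0 0).re : ℂ), 0],
    ![0, (√((ρ 1 1).re - ‖ρ 0 1‖ ^ 2 / (ρ 0 0).re) : ℂ), 0],
    ![0, 0, (√(ρ 2 2).re : ℂ)]]

lemma sum_outer_choleskyColumn {ρ : Matrix (Fin 3) (Fin 3) ℂ} (hρ : ρ.PosSemidef)
    (h13 : ρ 0 2 = 0) (h31 : ρ 2 0 = 0) (h23 : ρ 1 2 = 0) (h32 : ρ 2 1 = 0) :
    ∑ k, outer (choleskyColumn ρ k) = ρ := by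
  have hdiag : ∀ k, ((ρ k k).re : ℂ) = ρ k k := hρ.1.coe_re_apply_self
  have ha : 0 ≤ (ρ 0 0).re := hρ.re_apply_self_nonneg 0
  have hsq : ∀ x : ℝ, 0 ≤ x → (√x : ℂ) * (√x : ℂ) = x := fun x hx => by
    rw [← Complex.ofReal_mul, Real.mul_self_sqrt hx]
  have ht : (√(ρ 0 0).re : ℂ) = 0 → ρ 0 1 = 0 := fun h =>
    hρ.apply_eq_zero_of_re_apply_self_eq_zero
      ((Real.sqrt_eq_zero ha).mp (Complex.ofReal_eq_zero.mp h)) 1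
  have hb : ‖ρ 0 1‖ ^ 2 / (ρ 0 0).re ≤ (ρ 1 1).re := by
    rcases ha.eq_or_lt' with ha0 | ha0
    · simp [ha0, hρ.re_apply_self_nonneg 1]
    · exact (div_le_iff₀' ha0).mpr (hρ.norm_apply_sq_le 0 1)
  have h11 : starRingEnd ℂ (ρ 0 1) / (√(ρ 0 0).re : ℂ) * (ρ 0 1 / √(ρ 0 0).re) =
      ((‖ρ 0 1‖ ^ 2 / (ρ 0 0).re : ℝ) : ℂ) := by
    rw [div_mul_div_comm, Complex.conj_mul', hsq _ ha]
    push_cast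
    rfl
  ext i j
  fin_cases i <;> fin_cases j <;>
    simp only [outer, choleskyColumn, Matrix.sum_apply, of_apply, Fin.sum_univ_three, Fin.isValue,
      cons_val', cons_val_fin_one, cons_val_zero, cons_val_one, cons_val, Fin.zero_eta, Fin.mk_one,
      Fin.reduceFinMk, RCLike.star_def, map_div₀, Complex.conj_conj, Complex.conj_ofReal, map_zero,
      mul_zero, zero_mul, add_zero, zero_add, h13, h31, h23, h32]
  · rw [hsq _ ha, hdiag _]
  · exact mul_div_cancel_of_imp' ht
  · rw [← hρ.1.apply 1 0]
    exact div_mul_cancel_of_imp fun h => by simp [ht h]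
  · rw [h11, hsq _ (sub_nonneg.mpr hb), Complex.ofReal_sub, hdiag 1]
    ring
  · rw [hsq _ (hρ.re_apply_self_nonneg 2), hdiag _]

lemma sum_Cl1_outer_choleskyColumn {ρ : Matrix (Fin 3) (Fin 3) ℂ} (hρ : ρ.PosSemidef)
    (h13 : ρ 0 2 = 0) (h31 : ρ 2 0 = 0) (h23 : ρ 1 2 = 0) (h32 : ρ 2 1 = 0) :
    ∑ k, Cl1 (outer (choleskyColumn ρ k)) = Cl1 ρ := by
  have ht : |√(ρ 0 0).re| = 0 → ‖ρ 0 1‖ = 0 := fun h => by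
    rw [abs_eq_zero, Real.sqrt_eq_zero (hρ.re_apply_self_nonneg 0)] at h
    rw [hρ.apply_eq_zero_of_re_apply_self_eq_zero h, norm_zero]
  simp only [Cl1, outer, choleskyColumn, of_apply, Fin.sum_univ_three, Fin.isValue, cons_val',
    cons_val_fin_one, cons_val_zero, cons_val_one, cons_val, ne_eq, ite_not, ↓reduceIte,
    zero_ne_one, one_ne_zero, Fin.reduceEq, RCLike.star_def, Complex.norm_mul, RCLike.norm_conj,
    Complex.norm_real, Real.norm_eq_abs, Complex.norm_div, norm_zero, mul_zero, zero_mul,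
    add_zero, zero_add, h13, h23, h31, h32]
  rw [mul_div_cancel_of_imp' ht, div_mul_cancel_of_imp ht, ← hρ.1.apply 1 0, norm_star]

theorem cl1_eq_convexRoofCl1_block_diag_general (ρ : Matrix (Fin 3) (Fin 3) ℂ)
    (hρ : IsDensityMatrix ρ)
    (h13 : ρ 0 2 = 0) (h31 : ρ 2 0 = 0) (h23 : ρ 1 2 = 0) (h32 : ρ 2 1 = 0) :
    Cl1 ρ = convexRoofCl1 ρ :=
  (convexRoofCl1_eq_Cl1_of_sum_outer hρ.2 (choleskyColumn ρ)
    (sum_outer_choleskyColumn hρ.1 h13 h31 h23 h32).symm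
    (sum_Cl1_outer_choleskyColumn hρ.1 h13 h31 h23 h32).le).symm

/-- Theorem 3: for a rank-3 3×3 density matrix that is block diagonal with a 2×2
    upper-left block and ρ₃₃ in the lower-right corner, C_{l1}(ρ) = C̃_{l1}(ρ). -/
theorem cl1_eq_convexRoofCl1_block_diag (ρ : Matrix (Fin 3) (Fin 3) ℂ)
    (hρ : IsDensityMatrix ρ) (hrank : ρ.rank = 3)
    (h13 : ρ 0 2 = 0) (h31 : ρ 2 0 = 0) (h23 : ρ 1 2 = 0) (h32 : ρ 2 1 = 0) :
    Cl1 ρ = convexRoofCl1 ρ :=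
  cl1_eq_convexRoofCl1_block_diag_general ρ hρ h13 h31 h23 h32
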